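/- arXiv:2009.12776 — 2 statements merged into one kernel-verified Lean document; each statement's English description precedes it below -/
import Mathlib

section
/- Let V be a nonzero finite-dimensional vector space over \(\mathbb{C}\) and let \(D_1, \dots, D_n\) be linear endomorphisms of V satisfying \(D_i D_j + D_j D_i = 0\) for all i, j (in particular \(D_i^2 = 0\)). Then there exists a nonzero vector \(w \in V\) with \(D_i w = 0\) for all \(i = 1, \dots, n\). -/
universe u

lemma aux_common_kernel : ∀ n : ℕ, ∀ (V : Type u) [AddCommGroup V] [Module ℂ V]
    [FiniteDimensional ℂ V], Nontrivial V → ∀ D : Fin n → (V →ₗ[ℂ] V),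
    (∀ i j, D i ∘ₗ D j + D j ∘ₗ D i = 0) →
    ∃ w : V, w ≠ 0 ∧ ∀ i, D i w = 0 := by
  intro n
  induction n with
  | zero =>
    intro V _ _ _ hV D _
    obtain ⟨w, hw⟩ := exists_ne (0 : V)
    exact ⟨w, hw, fun i => i.elim0⟩
  | succ n ih =>
    intro V _ _ _ hV D hD
    set L := D (Fin.last n) with hL
    have hL2 : ∀ x, L (L x) = 0 := by
      intro x
      have := congrFun (congrArg DFunLike.coe (hD (Fin.last n) (Fin.last n))) x
      simp at this
      have h2 : (2:ℂ) • L (L x) = 0 := by rw [two_smul]; exact this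
      rcases smul_eq_zero.mp h2 with h | h
      · norm_num at h
      · exact h
    set K : Submodule ℂ V := LinearMap.ker L with hK
    have hKmem : ∀ i : Fin n, ∀ x ∈ K, D i.castSucc x ∈ K := by
      intro i x hx
      have := congrFun (congrArg DFunLike.coe (hD i.castSucc (Fin.last n))) x
      simp only [LinearMap.add_apply, LinearMap.comp_apply, LinearMap.zero_apply] at this
      have hx' : L x = 0 := hx
      simp only [hK, LinearMap.mem_ker]
      rw [← hL] at this
      rw [hx', map_zero] at this
      simpa using this
    have hKnt : Nontrivial K := by
      refine Submodule.nontrivial_iff_ne_bot.mpr ?_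
      intro hbot
      have hinj : Function.Injective L := LinearMap.ker_eq_bot.mp hbot
      obtain ⟨x, hx⟩ := exists_ne (0 : V)
      have h1 : L (L x) = L 0 := by rw [map_zero]; exact hL2 x
      have h2 : L x = L 0 := by rw [map_zero]; exact hinj h1
      exact hx (hinj h2)
    set D' : Fin n → (K →ₗ[ℂ] K) := fun i => (D i.castSucc).restrict (hKmem i) with hD'
    have hD'anti : ∀ i j, D' i ∘ₗ D' j + D' j ∘ₗ D' i = 0 := by
      intro i j
      ext x
      have := congrFun (congrArg DFunLike.coe (hD i.castSucc j.castSucc)) (x : V)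
      simpa [hD', LinearMap.restrict_apply] using this
    obtain ⟨w, hw0, hw⟩ := ih K hKnt D' hD'anti
    refine ⟨(w : V), by simpa using hw0, ?_⟩
    intro i
    refine Fin.lastCases ?_ ?_ i
    · exact w.2
    · intro j
      have := hw j
      have : ((D' j w : K) : V) = 0 := by rw [this]; rfl
      simpa [hD', LinearMap.restrict_apply] using this

theorem common_kernel_of_anticommuting_square_zero
    (V : Type*) [AddCommGroup V] [Module ℂ V] [FiniteDimensional ℂ V]
    (hV : Nontrivial V) (n : ℕ) (D : Fin n → (V →ₗ[ℂ] V))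
    (hD : ∀ i j, D i ∘ₗ D j + D j ∘ₗ D i = 0) :
    ∃ w : V, w ≠ 0 ∧ ∀ i, D i w = 0 := by
  exact aux_common_kernel n V hV D hD
end

section
/- Let B and B' be unital associative \(\mathbb{C}\)-algebras with B' having a countable basis, let M be a B-module, and let M' be a B'-module having no B'-invariant subspaces other than 0 and M' (strictly simple). Then the \(B \otimes B'\)-module \(M \otimes M'\) is simple if and only if M is a simple B-module. -/
/-!
Dixmier's form of Schur's lemma: `End_{B'}(M')` is a division algebra over `ℂ` of countable
dimension (it embeds into `M' = B' v₀` by evaluation at `v₀`), so each of its elements is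
algebraic over `ℂ`, hence a scalar. Jacobson density then lets the action of `B'` imitate any
`ℂ`-linear map of `M'` on finitely many vectors, so a subspace of `M ⊗ M'` invariant under
`B ⊗ B'` is invariant under `id ⊗ f` for every `f ∈ End_ℂ(M')`. Contracting a nonzero
element against a suitable functional on `M'` then puts some `m ⊗ M'` with `m ≠ 0` inside it,
and simplicity of `M` spreads this to all of `M ⊗ M'`. Conversely, a `B`-submodule `N` of `M`
gives the invariant subspace `N ⊗ M'`, which determines `N`.
-/

open Cardinal TensorProduct

universe u v w

theorem DivisionRing.isAlgebraic_of_lift_rank_lt {K : Type u} {D : Type v} [Field K]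
    [DivisionRing D] [Algebra K D] (h : lift.{u} (Module.rank K D) < lift.{v} #K) (x : D) :
    IsAlgebraic K x := by
  by_contra hx
  -- The double centralizer of `x` is a commutative division subalgebra containing `x`, in which
  -- the family `(x - a)⁻¹` is linearly independent as soon as `x` is transcendental.
  let S := Subalgebra.centralizer K (Set.centralizer {x})
  have hcomm : ∀ a ∈ S, ∀ b ∈ S, a * b = b * a :=
    Set.centralizer_centralizer_comm_of_comm (by simp)
  let : Field S := IsField.toField
    ⟨⟨0, 1, zero_ne_one⟩, fun a b => Subtype.ext (hcomm _ a.2 _ b.2),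
      fun {a} ha => ⟨⟨a⁻¹, Set.inv_mem_centralizer₀ a.2⟩,
        Subtype.ext (mul_inv_cancel₀ (Subtype.coe_ne_coe.mpr ha))⟩⟩
  have hxS : Transcendental K (⟨x, Set.subset_centralizer_centralizer rfl⟩ : S) :=
    fun hA => hx (by simpa using hA.algHom S.val)
  have hli := (hxS.linearIndependent_sub_inv.map' S.val.toLinearMap
    (LinearMap.ker_eq_bot.mpr Subtype.val_injective)).cardinal_lift_le_rank
  exact hli.not_gt h

theorem DivisionRing.algebraMap_surjective_of_lift_rank_lt {K : Type u} {D : Type v} [Field K]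
    [IsAlgClosed K] [DivisionRing D] [Algebra K D]
    (h : lift.{u} (Module.rank K D) < lift.{v} #K) : Function.Surjective (algebraMap K D) :=
  have : Algebra.IsAlgebraic K D := ⟨isAlgebraic_of_lift_rank_lt h⟩
  IsAlgClosed.algebraMap_bijective_of_isIntegral.2

theorem Module.Basis.rank_le_aleph0 {ι R M : Type*} [Ring R] [StrongRankCondition R]
    [AddCommGroup M] [Module R M] [Countable ι] (b : Module.Basis ι R M) :
    Module.rank R M ≤ ℵ₀ := by
  rw [← lift_le_aleph0, ← b.mk_eq_rank, lift_le_aleph0]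
  exact mk_le_aleph0

section Schur

variable {K : Type u} {R : Type v} {M : Type w} [Field K] [Ring R] [Algebra K R]
  [AddCommGroup M] [Module K M] [Module R M] [IsScalarTower K R M]

theorem IsSimpleModule.lift_rank_le [IsSimpleModule R M] :
    lift.{v} (Module.rank K M) ≤ lift.{w} (Module.rank K R) := by
  have := IsSimpleModule.nontrivial R M
  obtain ⟨m, hm⟩ := exists_ne (0 : M)
  exact LinearMap.lift_rank_le_of_surjective
    ((LinearMap.toSpanSingleton R M m).restrictScalars K)
    (IsSimpleModule.toSpanSingleton_surjective R hm)

theorem IsSimpleModule.rank_end_le [IsSimpleModule R M] :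
    Module.rank K (Module.End R M) ≤ Module.rank K M := by
  have := IsSimpleModule.nontrivial R M
  obtain ⟨m, hm⟩ := exists_ne (0 : M)
  let ev : Module.End R M →ₗ[K] M :=
    { toFun := fun f => f m, map_add' := fun _ _ => rfl, map_smul' := fun _ _ => rfl }
  refine LinearMap.rank_le_of_injective ev fun f g hfg => ?_
  rw [← sub_eq_zero]
  exact (LinearMap.injective_or_eq_zero (f - g)).resolve_left fun hi =>
    hm (hi (by simpa [ev, sub_eq_zero] using hfg))

theorem IsSimpleModule.algebraMap_end_surjective [IsAlgClosed K] [IsSimpleModule R M]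
    (h : lift.{u} (Module.rank K R) < lift.{v} #K) :
    Function.Surjective (algebraMap K (Module.End R M)) := by
  classical
  apply DivisionRing.algebraMap_surjective_of_lift_rank_lt
  have h1 : lift.{max u v} (Module.rank K (Module.End R M)) ≤ lift.{max u v} (Module.rank K M) :=
    lift_le.mpr rank_end_le
  have h2 : lift.{u} (lift.{v} (Module.rank K M)) ≤ lift.{u} (lift.{w} (Module.rank K R)) :=
    lift_le.mpr lift_rank_le
  have h3 : lift.{w} (lift.{u} (Module.rank K R)) < lift.{w} (lift.{v} #K) := lift_lt.mpr h
  refine lift_lt.{_, v}.mp ?_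
  simp only [lift_lift] at h1 h2 h3 ⊢
  exact (h1.trans h2).trans_lt h3

theorem IsSemisimpleModule.exists_smul_eq_on_finset [IsSemisimpleModule R M]
    (h : Function.Surjective (algebraMap K (Module.End R M))) (f : M →ₗ[K] M) (s : Finset M) :
    ∃ r : R, ∀ m ∈ s, f m = r • m := by
  let F : Module.End (Module.End R M) M :=
    { toFun := f, map_add' := f.map_add
      map_smul' := fun g m => by
        obtain ⟨c, rfl⟩ := h g
        simp }
  exact jacobson_density F s

end Schur

namespace TensorProduct

variable {K V W : Type*} [Field K] [AddCommGroup V] [Module K V] [AddCommGroup W] [Module K W]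

theorem exists_rid_lTensor_ne_zero {z : V ⊗[K] W} (hz : z ≠ 0) :
    ∃ φ : Module.Dual K W, TensorProduct.rid K V (φ.lTensor V z) ≠ 0 := by
  let b := Module.Free.chooseBasis K W
  let e := (LinearEquiv.lTensor V b.repr).trans (finsuppScalarRight K K V _)
  obtain ⟨j, hj⟩ : ∃ j, e z j ≠ 0 := by
    by_contra! h
    exact hz (e.map_eq_zero_iff.mp (Finsupp.ext h))
  refine ⟨b.coord j, ?_⟩
  rw [Module.Basis.coord, LinearMap.lTensor_comp_apply]
  simp only [e, LinearEquiv.trans_apply, finsuppScalarRight_apply] at hj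
  exact hj

theorem tmul_ne_zero {v : V} {w : W} (hv : v ≠ 0) (hw : w ≠ 0) : v ⊗ₜ[K] w ≠ 0 := by
  obtain ⟨φ, hφ⟩ := Module.Projective.exists_dual_eq_one K hw
  intro h
  simpa [hφ, hv] using congr(TensorProduct.rid K V (φ.lTensor V $h))

theorem lTensor_smulRight (φ : Module.Dual K W) (w : W) (z : V ⊗[K] W) :
    (φ.smulRight w).lTensor V z = TensorProduct.rid K V (φ.lTensor V z) ⊗ₜ w := by
  induction z using TensorProduct.induction_on with
  | zero => simp
  | tmul v w' => simp [smul_tmul]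
  | add z z' hz hz' => simp [hz, hz', add_tmul]

variable {R : Type*} [Ring R] [Algebra K R]

theorem lTensor_mem_of_exists_smul_eq_on_finset [Module R W] [IsScalarTower K R W]
    (hdense : ∀ (f : W →ₗ[K] W) (s : Finset W), ∃ r : R, ∀ w ∈ s, f w = r • w)
    {U : Submodule K (V ⊗[K] W)}
    (hU : ∀ r : R, ∀ z ∈ U, (Algebra.lsmul K K W r).lTensor V z ∈ U)
    (f : W →ₗ[K] W) {z : V ⊗[K] W} (hz : z ∈ U) : f.lTensor V z ∈ U := by
  classical
  obtain ⟨S, rfl⟩ := exists_finset z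
  obtain ⟨r, hr⟩ := hdense f (S.image Prod.snd)
  convert hU r _ hz using 1
  simp only [map_sum, LinearMap.lTensor_tmul, Algebra.lsmul_coe]
  exact Finset.sum_congr rfl fun p hp => by rw [hr p.2 (Finset.mem_image_of_mem _ hp)]

theorem exists_forall_tmul_mem {U : Submodule K (V ⊗[K] W)} (hU₀ : U ≠ ⊥)
    (hU : ∀ f : W →ₗ[K] W, ∀ z ∈ U, f.lTensor V z ∈ U) :
    ∃ v : V, v ≠ 0 ∧ ∀ w : W, v ⊗ₜ w ∈ U := by
  obtain ⟨z, hzU, hz⟩ := U.ne_bot_iff.mp hU₀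
  obtain ⟨φ, hφ⟩ := exists_rid_lTensor_ne_zero hz
  exact ⟨_, hφ, fun w => lTensor_smulRight φ w z ▸ hU _ z hzU⟩

theorem eq_top_of_forall_tmul_mem [Module R V] [IsScalarTower K R V] [IsSimpleModule R V]
    {U : Submodule K (V ⊗[K] W)}
    (hU : ∀ r : R, ∀ z ∈ U, (Algebra.lsmul K K V r).rTensor W z ∈ U)
    {v : V} (hv : v ≠ 0) (hvU : ∀ w : W, v ⊗ₜ w ∈ U) : U = ⊤ := by
  rw [eq_top_iff, ← span_tmul_eq_top, Submodule.span_le]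
  rintro _ ⟨v', w, rfl⟩
  obtain ⟨r, rfl⟩ := IsSimpleModule.toSpanSingleton_surjective R hv v'
  simpa using hU r _ (hvU w)

theorem mem_of_tmul_mem_range_rTensor {N : Submodule K V} {v : V} {w : W} (hw : w ≠ 0)
    (h : v ⊗ₜ w ∈ LinearMap.range (N.subtype.rTensor W)) : v ∈ N := by
  obtain ⟨φ, hφ⟩ := Module.Projective.exists_dual_eq_one K hw
  obtain ⟨y, hy⟩ := h
  have hv : TensorProduct.rid K V (φ.lTensor V (v ⊗ₜ w)) = v := by simp [hφ]
  rw [← hv, ← hy]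
  clear hv hy
  induction y using TensorProduct.induction_on with
  | zero => simp
  | tmul n w' => simpa using N.smul_mem (φ w') n.2
  | add y y' hy hy' => simpa using N.add_mem hy hy'

theorem map_mem_range_rTensor [Module R V] [IsScalarTower K R V] (N : Submodule R V)
    (r : R) (g : W →ₗ[K] W) {z : V ⊗[K] W}
    (hz : z ∈ LinearMap.range ((N.restrictScalars K).subtype.rTensor W)) :
    map (Algebra.lsmul K K V r) g z ∈
      LinearMap.range ((N.restrictScalars K).subtype.rTensor W) := by
  obtain ⟨y, rfl⟩ := hz
  let rN : N.restrictScalars K →ₗ[K] N.restrictScalars K :=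
    (Algebra.lsmul K K V r).restrict fun n hn => N.smul_mem r hn
  refine ⟨map rN g y, ?_⟩
  rw [LinearMap.rTensor, ← LinearMap.comp_apply, ← LinearMap.comp_apply, ← map_comp,
    ← map_comp]
  rfl

end TensorProduct

theorem isSimpleModule_of_forall_invariant_eq_bot_or_eq_top {K R W : Type*} [Field K] [Ring R]
    [Algebra K R] [AddCommGroup W] [Module K W] [Module R W] [IsScalarTower K R W]
    [Nontrivial W]
    (h : ∀ N : Submodule K W, (∀ r : R, ∀ w ∈ N, r • w ∈ N) → N = ⊥ ∨ N = ⊤) :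
    IsSimpleModule R W where
  eq_bot_or_eq_top N := by simpa using h (N.restrictScalars K) fun r _ hw => N.smul_mem r hw

section TensorSimple

variable {K R R' V W : Type*} [Field K] [Ring R] [Algebra K R] [Ring R'] [Algebra K R']
  [AddCommGroup V] [Module K V] [Module R V] [IsScalarTower K R V]
  [AddCommGroup W] [Module K W] [Module R' W] [IsScalarTower K R' W]

theorem isSimpleModule_of_forall_invariant_tensor_eq_bot_or_eq_top [Nontrivial W]
    [Nontrivial (V ⊗[K] W)]
    (h : ∀ U : Submodule K (V ⊗[K] W), (∀ (r : R) (r' : R'), ∀ z ∈ U,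
      map (Algebra.lsmul K K V r) (Algebra.lsmul K K W r') z ∈ U) → U = ⊥ ∨ U = ⊤) :
    IsSimpleModule R V := by
  have : Nontrivial V := (subsingleton_or_nontrivial V).resolve_left
    fun _ => not_subsingleton (V ⊗[K] W) inferInstance
  obtain ⟨w, hw⟩ := exists_ne (0 : W)
  refine (isSimpleModule_iff R V).mpr ⟨fun N => ?_⟩
  refine (h _ fun r _ _ => map_mem_range_rTensor N r _).imp (fun hN => ?_) (fun hN => ?_)
  · refine eq_bot_iff.mpr fun v hv => of_not_not fun hv₀ => tmul_ne_zero (K := K) hv₀ hw ?_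
    simpa [hN] using LinearMap.mem_range_self ((N.restrictScalars K).subtype.rTensor W)
      ((⟨v, hv⟩ : N.restrictScalars K) ⊗ₜ w)
  · exact eq_top_iff.mpr fun v _ => mem_of_tmul_mem_range_rTensor hw (hN ▸ Submodule.mem_top)

theorem invariant_tensor_eq_bot_or_eq_top [IsSimpleModule R V]
    (hdense : ∀ (f : W →ₗ[K] W) (s : Finset W), ∃ r' : R', ∀ w ∈ s, f w = r' • w)
    (U : Submodule K (V ⊗[K] W)) (hU : ∀ (r : R) (r' : R'), ∀ z ∈ U,
      map (Algebra.lsmul K K V r) (Algebra.lsmul K K W r') z ∈ U) :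
    U = ⊥ ∨ U = ⊤ := by
  refine or_iff_not_imp_left.mpr fun hU₀ => ?_
  have hRU : ∀ r : R, ∀ z ∈ U, (Algebra.lsmul K K V r).rTensor W z ∈ U := fun r z hz => by
    simpa [LinearMap.rTensor, ← Module.End.one_eq_id] using hU r 1 z hz
  have hR'U : ∀ r' : R', ∀ z ∈ U, (Algebra.lsmul K K W r').lTensor V z ∈ U :=
    fun r' z hz => by simpa [LinearMap.lTensor, ← Module.End.one_eq_id] using hU 1 r' z hz
  obtain ⟨v, hv, hvU⟩ := exists_forall_tmul_mem hU₀
    fun f z hz => lTensor_mem_of_exists_smul_eq_on_finset hdense hR'U f hz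
  exact eq_top_of_forall_tmul_mem hRU hv hvU

end TensorSimple

theorem tensor_simple_iff_simple_general
    (B B' : Type*) [Ring B] [Algebra ℂ B] [Ring B'] [Algebra ℂ B']
    (ι : Type*) [Countable ι] (bB' : Module.Basis ι ℂ B')
    (M : Type*) [AddCommGroup M] [Module ℂ M] [Module B M]
    [IsScalarTower ℂ B M]
    (M' : Type*) [AddCommGroup M'] [Module ℂ M'] [Module B' M']
    [IsScalarTower ℂ B' M']
    (hM'nt : Nontrivial M')
    (hM'strict : ∀ N : Submodule ℂ M', (∀ (b' : B'), ∀ v ∈ N, b' • v ∈ N) → N = ⊥ ∨ N = ⊤) :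
    ((Nontrivial (M ⊗[ℂ] M') ∧
      ∀ U : Submodule ℂ (M ⊗[ℂ] M'),
        (∀ (b : B) (b' : B'), ∀ z ∈ U,
          TensorProduct.map
            (Algebra.lsmul ℂ ℂ M b : M →ₗ[ℂ] M)
            (Algebra.lsmul ℂ ℂ M' b' : M' →ₗ[ℂ] M') z ∈ U) →
        U = ⊥ ∨ U = ⊤)
      ↔ IsSimpleModule B M) := by
  have := isSimpleModule_of_forall_invariant_eq_bot_or_eq_top hM'strict
  have hB' : lift.{0} (Module.rank ℂ B') < lift #ℂ := by
    rw [mk_complex, lift_continuum]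
    exact (lift_le_aleph0.mpr bB'.rank_le_aleph0).trans_lt aleph0_lt_continuum
  have hdense := IsSemisimpleModule.exists_smul_eq_on_finset
    (IsSimpleModule.algebraMap_end_surjective (M := M') hB')
  refine ⟨fun ⟨_, h⟩ => isSimpleModule_of_forall_invariant_tensor_eq_bot_or_eq_top h,
    fun _ => ?_⟩
  have := IsSimpleModule.nontrivial B M
  exact ⟨inferInstance, invariant_tensor_eq_bot_or_eq_top hdense⟩

theorem tensor_simple_iff_simple
    (B B' : Type*) [Ring B] [Algebra ℂ B] [Ring B'] [Algebra ℂ B']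
    (ι : Type*) [Countable ι] (bB' : Module.Basis ι ℂ B')
    (M : Type*) [AddCommGroup M] [Module ℂ M] [Module B M]
    [IsScalarTower ℂ B M] [SMulCommClass ℂ B M]
    (M' : Type*) [AddCommGroup M'] [Module ℂ M'] [Module B' M']
    [IsScalarTower ℂ B' M'] [SMulCommClass ℂ B' M']
    (hM'nt : Nontrivial M')
    (hM'strict : ∀ N : Submodule ℂ M', (∀ (b' : B'), ∀ v ∈ N, b' • v ∈ N) → N = ⊥ ∨ N = ⊤) :
    ((Nontrivial (M ⊗[ℂ] M') ∧
      ∀ U : Submodule ℂ (M ⊗[ℂ] M'),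
        (∀ (b : B) (b' : B'), ∀ z ∈ U,
          TensorProduct.map
            (Algebra.lsmul ℂ ℂ M b : M →ₗ[ℂ] M)
            (Algebra.lsmul ℂ ℂ M' b' : M' →ₗ[ℂ] M') z ∈ U) →
        U = ⊥ ∨ U = ⊤)
      ↔ IsSimpleModule B M) :=
  tensor_simple_iff_simple_general B B' ι bB' M M' hM'nt hM'strict
end
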